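/- Let B(z) = C · ∏_{i=1}^n (z − a_i)/(1 − conj(a_i)·z) be a finite Blaschke product with n ≥ 2 such that |B'(z)| > 1 for all z with |z| = 1. Then there exist radii r and R with 0 < r < 1 < R, with R < 1/|a_i| for every i with a_i ≠ 0, such that: |B(z)| < r for every z with |z| = r, and |B(z)| > R for every z with |z| = R. In particular B maps the circle of radius r strictly inside the disk of radius r and maps the circle of radius R strictly outside the disk of radius R. -/

import Mathlib

/-!
For `‖z‖ < 1` the Schwarz–Pick lemma gives `‖B' z‖ (1 - ‖z‖²) ≤ 1 - ‖B z‖²`, so wherever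
`‖B'‖ > 1` inside the disc we get `‖B z‖ < ‖z‖`. Since `B'` is continuous near the unit circle,
`‖B'‖ > 1` on a whole annulus `1 - ε < ‖z‖ < 1 + ε`, which yields the inner radius `r`.
The reflection identity `B z · conj (B (conj z)⁻¹) = 1` then turns the inner estimate on the circle
of radius `r` into the outer one on the circle of radius `R = r⁻¹`.
-/

open Complex ComplexConjugate Filter Metric Set Topology

noncomputable def blaschkeFactor (a z : ℂ) : ℂ := (z - a) / (1 - conj a * z)

section BlaschkeFactor

variable {a z : ℂ}

lemma sq_norm_one_sub_conj_mul_sub_sq_norm_sub (a z : ℂ) :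
    ‖1 - conj a * z‖ ^ 2 - ‖z - a‖ ^ 2 = (1 - ‖a‖ ^ 2) * (1 - ‖z‖ ^ 2) := by
  simp only [← Complex.normSq_eq_norm_sq, Complex.normSq_apply, Complex.sub_re, Complex.sub_im,
    Complex.mul_re, Complex.mul_im, Complex.one_re, Complex.one_im, Complex.conj_re,
    Complex.conj_im]
  ring

lemma one_sub_conj_mul_ne_zero (h : ‖a‖ * ‖z‖ < 1) : 1 - conj a * z ≠ 0 := by
  rw [sub_ne_zero, ne_comm]
  refine ne_of_apply_ne norm (ne_of_lt ?_)
  simpa using h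

lemma norm_blaschkeFactor_lt_one (ha : ‖a‖ < 1) (hz : ‖z‖ < 1) : ‖blaschkeFactor a z‖ < 1 := by
  have hden : 0 < ‖1 - conj a * z‖ :=
    norm_pos_iff.2 (one_sub_conj_mul_ne_zero (by nlinarith [norm_nonneg a, norm_nonneg z]))
  rw [blaschkeFactor, norm_div, div_lt_one hden]
  refine lt_of_pow_lt_pow_left₀ 2 hden.le ?_
  have hpos : 0 < (1 - ‖a‖ ^ 2) * (1 - ‖z‖ ^ 2) :=
    mul_pos (by nlinarith [norm_nonneg a]) (by nlinarith [norm_nonneg z])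
  linarith [sq_norm_one_sub_conj_mul_sub_sq_norm_sub a z]

lemma mapsTo_blaschkeFactor_ball (ha : ‖a‖ < 1) :
    MapsTo (blaschkeFactor a) (ball 0 1) (ball 0 1) := fun z hz => by
  rw [mem_ball_zero_iff] at hz ⊢
  exact norm_blaschkeFactor_lt_one ha hz

lemma hasDerivAt_blaschkeFactor (h : 1 - conj a * z ≠ 0) :
    HasDerivAt (blaschkeFactor a) ((1 - ‖a‖ ^ 2) / (1 - conj a * z) ^ 2) z := by
  have hnum : HasDerivAt (fun w => w - a) 1 z := (hasDerivAt_id z).sub_const a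
  have hden : HasDerivAt (fun w => 1 - conj a * w) (-conj a) z := by
    simpa using ((hasDerivAt_id z).const_mul (conj a)).const_sub 1
  refine (hnum.div hden h).congr_deriv ?_
  rw [← Complex.conj_mul']
  ring

lemma differentiableOn_blaschkeFactor_ball (ha : ‖a‖ < 1) :
    DifferentiableOn ℂ (blaschkeFactor a) (ball 0 1) := fun z hz =>
  (hasDerivAt_blaschkeFactor (one_sub_conj_mul_ne_zero (by
    rw [mem_ball_zero_iff] at hz; nlinarith [norm_nonneg a, norm_nonneg z]))).differentiableAt
    |>.differentiableWithinAt

lemma blaschkeFactor_mul_conj_blaschkeFactor_inv_conj (hz : z ≠ 0) (hza : z ≠ a)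
    (hden : 1 - conj a * z ≠ 0) :
    blaschkeFactor a z * conj (blaschkeFactor a (conj z)⁻¹) = 1 := by
  have hza' : z - a ≠ 0 := sub_ne_zero.2 hza
  simp only [blaschkeFactor, map_div₀, map_sub, map_mul, map_one, map_inv₀, Complex.conj_conj]
  rw [div_mul_div_comm, div_eq_one_iff_eq]
  · field_simp
  · field_simp
    exact div_ne_zero (mul_ne_zero hden hza') hz

lemma hasDerivAt_blaschkeFactor_zero (a : ℂ) :
    HasDerivAt (blaschkeFactor a) ((1 - ‖a‖ ^ 2 : ℝ) : ℂ) 0 :=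
  (hasDerivAt_blaschkeFactor (by simp)).congr_deriv (by push_cast; ring)

lemma hasDerivAt_blaschkeFactor_self (ha : ‖a‖ < 1) :
    HasDerivAt (blaschkeFactor a) ((1 - ‖a‖ ^ 2 : ℝ) : ℂ)⁻¹ a := by
  have hpos : (0 : ℝ) < 1 - ‖a‖ ^ 2 := by nlinarith [norm_nonneg a]
  have hden : 1 - conj a * a = ((1 - ‖a‖ ^ 2 : ℝ) : ℂ) := by
    rw [Complex.conj_mul']
    push_cast
    ring
  refine (hasDerivAt_blaschkeFactor (hden ▸ ofReal_ne_zero.2 hpos.ne')).congr_deriv ?_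
  rw [hden]
  push_cast
  field_simp [hpos.ne']

end BlaschkeFactor

/-- The **Schwarz–Pick lemma** for the unit disc. -/
theorem norm_deriv_mul_one_sub_sq_le {f : ℂ → ℂ} (hd : DifferentiableOn ℂ f (ball 0 1))
    (hm : MapsTo f (ball 0 1) (ball 0 1)) {z : ℂ} (hz : ‖z‖ < 1) :
    ‖deriv f z‖ * (1 - ‖z‖ ^ 2) ≤ 1 - ‖f z‖ ^ 2 := by
  have hz' : z ∈ ball (0 : ℂ) 1 := mem_ball_zero_iff.2 hz
  set b := f z with hb_def
  have hb : ‖b‖ < 1 := mem_ball_zero_iff.1 (hm hz')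
  have hnz : ‖-z‖ < 1 := by rwa [norm_neg]
  have hφ0 : blaschkeFactor (-z) 0 = z := by simp [blaschkeFactor]
  -- move `z` to `0` and `f z` back to `0`, then apply the Schwarz lemma
  set g := blaschkeFactor b ∘ f ∘ blaschkeFactor (-z)
  have hg0 : g 0 = 0 := by simp [g, blaschkeFactor, ← hb_def]
  have hg : HasDerivAt g
      (((1 - ‖b‖ ^ 2 : ℝ) : ℂ)⁻¹ * (deriv f z * ((1 - ‖z‖ ^ 2 : ℝ) : ℂ))) 0 := by
    have hf : HasDerivAt f (deriv f z) (blaschkeFactor (-z) 0) := by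
      rw [hφ0]
      exact (hd.differentiableAt (isOpen_ball.mem_nhds hz')).hasDerivAt
    have hψ : HasDerivAt (blaschkeFactor b) ((1 - ‖b‖ ^ 2 : ℝ) : ℂ)⁻¹
        (f (blaschkeFactor (-z) 0)) := by
      rw [hφ0]
      exact hasDerivAt_blaschkeFactor_self hb
    simpa [norm_neg] using hψ.comp 0 (hf.comp 0 (hasDerivAt_blaschkeFactor_zero (-z)))
  have hg_maps : MapsTo g (ball 0 1) (closedBall (g 0) 1) := by
    rw [hg0]
    exact ((mapsTo_blaschkeFactor_ball hb).comp
      (hm.comp (mapsTo_blaschkeFactor_ball hnz))).mono_right ball_subset_closedBall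
  have hg_diff : DifferentiableOn ℂ g (ball 0 1) :=
    (differentiableOn_blaschkeFactor_ball hb).comp
      (hd.comp (differentiableOn_blaschkeFactor_ball hnz) (mapsTo_blaschkeFactor_ball hnz))
      (hm.comp (mapsTo_blaschkeFactor_ball hnz))
  have hschwarz := Complex.norm_deriv_le_one_of_mapsTo_ball hg_diff hg_maps one_pos
  have hb2 : 0 < 1 - ‖b‖ ^ 2 := by nlinarith [norm_nonneg b]
  have hz2 : 0 < 1 - ‖z‖ ^ 2 := by nlinarith [norm_nonneg z]
  rw [hg.deriv, norm_mul, norm_mul, norm_inv, norm_real, norm_real, Real.norm_of_nonneg hb2.le,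
    Real.norm_of_nonneg hz2.le, inv_mul_le_iff₀ hb2, mul_one] at hschwarz
  exact hschwarz

theorem norm_lt_norm_of_one_lt_norm_deriv {f : ℂ → ℂ} (hd : DifferentiableOn ℂ f (ball 0 1))
    (hm : MapsTo f (ball 0 1) (ball 0 1)) {z : ℂ} (hz : ‖z‖ < 1) (hf' : 1 < ‖deriv f z‖) :
    ‖f z‖ < ‖z‖ := by
  have hz2 : 0 < 1 - ‖z‖ ^ 2 := by nlinarith [norm_nonneg z]
  have hpick := norm_deriv_mul_one_sub_sq_le hd hm hz
  exact lt_of_pow_lt_pow_left₀ 2 (norm_nonneg z) (by nlinarith)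

theorem exists_annulus_subset_of_sphere_subset {E : Type*} [NormedAddCommGroup E]
    [NormedSpace ℝ E] [ProperSpace E] {V : Set E} (hV : IsOpen V) (hsub : sphere 0 1 ⊆ V) :
    ∃ ε > 0, ∀ z : E, |‖z‖ - 1| < ε → z ∈ V := by
  obtain ⟨ε, hε, hthick⟩ := (isCompact_sphere (0 : E) 1).exists_thickening_subset_open hV hsub
  refine ⟨min ε 1, lt_min hε one_pos, fun z hz => hthick (mem_thickening_iff.2 ?_)⟩
  have hz0 : z ≠ 0 := by
    rintro rfl
    simp at hz
  have hnorm : 0 < ‖z‖ := norm_pos_iff.2 hz0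
  refine ⟨‖z‖⁻¹ • z, by simp [norm_smul, hnorm.ne'],
    lt_of_le_of_lt ?_ (hz.trans_le (min_le_left _ _))⟩
  have hsub : z - ‖z‖⁻¹ • z = (1 - ‖z‖⁻¹) • z := by rw [sub_smul, one_smul]
  rw [dist_eq_norm, hsub, norm_smul, Real.norm_eq_abs, ← abs_of_pos hnorm, ← abs_mul,
    abs_of_pos hnorm, sub_mul, one_mul, inv_mul_cancel₀ hnorm.ne']

noncomputable def blaschkeProduct {ι : Type*} [Fintype ι] (C : ℂ) (a : ι → ℂ) (z : ℂ) : ℂ :=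
  C * ∏ i, blaschkeFactor (a i) z

section BlaschkeProduct

variable {ι : Type*} [Fintype ι] {C : ℂ} {a : ι → ℂ}

lemma exists_one_lt_forall_norm_mul_lt_one (ha : ∀ i, ‖a i‖ < 1) :
    ∃ ρ, 1 < ρ ∧ ∀ i, ‖a i‖ * ρ < 1 := by
  refine Eventually.exists_gt (eventually_all.2 fun i => ?_)
  have : Tendsto (fun ρ : ℝ => ‖a i‖ * ρ) (𝓝 1) (𝓝 (‖a i‖ * 1)) := tendsto_id.const_mul _
  exact this.eventually (gt_mem_nhds (by simpa using ha i))

lemma differentiableOn_blaschkeProduct {ρ : ℝ} (hρ : ∀ i, ‖a i‖ * ρ < 1) :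
    DifferentiableOn ℂ (blaschkeProduct C a) (ball 0 ρ) := by
  intro z hz
  have hden : ∀ i, 1 - conj (a i) * z ≠ 0 := fun i => one_sub_conj_mul_ne_zero <|
    (mul_le_mul_of_nonneg_left (mem_ball_zero_iff.1 hz).le (norm_nonneg _)).trans_lt (hρ i)
  exact ((differentiableAt_const C).mul (DifferentiableAt.fun_finsetProd fun i _ =>
    (hasDerivAt_blaschkeFactor (hden i)).differentiableAt)).differentiableWithinAt

lemma mapsTo_blaschkeProduct_ball [Nonempty ι] (hC : ‖C‖ = 1) (ha : ∀ i, ‖a i‖ < 1) :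
    MapsTo (blaschkeProduct C a) (ball 0 1) (ball 0 1) := by
  intro z hz
  have hlt : ∀ i, ‖blaschkeFactor (a i) z‖ < 1 := fun i =>
    norm_blaschkeFactor_lt_one (ha i) (mem_ball_zero_iff.1 hz)
  classical
  obtain ⟨i⟩ := ‹Nonempty ι›
  rw [mem_ball_zero_iff, blaschkeProduct, norm_mul, hC, one_mul, norm_prod,
    ← Finset.mul_prod_erase _ _ (Finset.mem_univ i)]
  exact mul_lt_one_of_nonneg_of_lt_one_left (norm_nonneg _) (hlt i)
    (Finset.prod_le_one (fun _ _ => norm_nonneg _) fun j _ => (hlt j).le)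

lemma blaschkeProduct_mul_conj_blaschkeProduct_inv_conj (hC : ‖C‖ = 1) {z : ℂ} (hz : z ≠ 0)
    (hza : ∀ i, z ≠ a i) (hden : ∀ i, 1 - conj (a i) * z ≠ 0) :
    blaschkeProduct C a z * conj (blaschkeProduct C a (conj z)⁻¹) = 1 := by
  have hCC : C * conj C = 1 := by
    rw [Complex.mul_conj', hC]
    norm_num
  rw [blaschkeProduct, blaschkeProduct, map_mul, map_prod, mul_mul_mul_comm, hCC, one_mul,
    ← Finset.prod_mul_distrib]
  exact Finset.prod_eq_one fun i _ =>
    blaschkeFactor_mul_conj_blaschkeFactor_inv_conj hz (hza i) (hden i)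

lemma norm_blaschkeProduct_mul_norm_inv_conj (hC : ‖C‖ = 1) {z : ℂ} (hz : 1 < ‖z‖)
    (hza : ∀ i, ‖a i‖ * ‖z‖ < 1) :
    ‖blaschkeProduct C a z‖ * ‖blaschkeProduct C a (conj z)⁻¹‖ = 1 := by
  have hz0 : z ≠ 0 := norm_pos_iff.1 (one_pos.trans hz)
  have hne : ∀ i, z ≠ a i := by
    rintro i rfl
    nlinarith [hza i]
  rw [← Complex.norm_conj (blaschkeProduct C a (conj z)⁻¹), ← norm_mul,
    blaschkeProduct_mul_conj_blaschkeProduct_inv_conj hC hz0 hne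
      fun i => one_sub_conj_mul_ne_zero (hza i), norm_one]

lemma exists_norm_blaschkeProduct_lt_norm [Nonempty ι] (hC : ‖C‖ = 1) (ha : ∀ i, ‖a i‖ < 1)
    (hexp : ∀ z : ℂ, ‖z‖ = 1 → 1 < ‖deriv (blaschkeProduct C a) z‖) :
    ∃ ε > 0, ∀ z : ℂ, 1 - ε < ‖z‖ → ‖z‖ < 1 → ‖blaschkeProduct C a z‖ < ‖z‖ := by
  obtain ⟨ρ, hρ1, hρ⟩ := exists_one_lt_forall_norm_mul_lt_one ha
  have hdiff : DifferentiableOn ℂ (blaschkeProduct C a) (ball 0 ρ) :=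
    differentiableOn_blaschkeProduct hρ
  have hcont : ContinuousOn (fun z => ‖deriv (blaschkeProduct C a) z‖) (ball 0 ρ) :=
    ((hdiff.analyticOnNhd isOpen_ball).deriv.continuousOn).norm
  obtain ⟨ε, hε, hV⟩ := exists_annulus_subset_of_sphere_subset
    (hcont.isOpen_inter_preimage isOpen_ball isOpen_Ioi) fun z hz =>
      ⟨mem_ball_zero_iff.2 ((mem_sphere_zero_iff_norm.1 hz).trans_lt hρ1),
        hexp z (mem_sphere_zero_iff_norm.1 hz)⟩
  refine ⟨ε, hε, fun z hzε hz1 => norm_lt_norm_of_one_lt_norm_deriv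
    (hdiff.mono (ball_subset_ball hρ1.le)) (mapsTo_blaschkeProduct_ball hC ha) hz1
    (hV z (abs_sub_lt_iff.2 ⟨by linarith, by linarith⟩)).2⟩

end BlaschkeProduct

theorem stmt_18 (n : ℕ) (hn : 2 ≤ n) (a : Fin n → ℂ) (ha : ∀ i, ‖a i‖ < 1)
    (C : ℂ) (hC : ‖C‖ = 1)
    (B : ℂ → ℂ)
    (hB : ∀ w : ℂ, B w = C * ∏ i, (w - a i) / (1 - (starRingEnd ℂ) (a i) * w))
    (hexp : ∀ z : ℂ, ‖z‖ = 1 → 1 < ‖deriv B z‖) :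
    ∃ r R : ℝ, 0 < r ∧ r < 1 ∧ 1 < R ∧
      (∀ i, a i ≠ 0 → R < 1 / ‖a i‖) ∧
      (∀ z : ℂ, ‖z‖ = r → ‖B z‖ < r) ∧
      (∀ z : ℂ, ‖z‖ = R → R < ‖B z‖) := by
  obtain rfl : B = blaschkeProduct C a := funext hB
  have : Nonempty (Fin n) := ⟨⟨0, by omega⟩⟩
  obtain ⟨ε, hε, hinner⟩ := exists_norm_blaschkeProduct_lt_norm hC ha hexp
  obtain ⟨ρ, hρ1, hρ⟩ := exists_one_lt_forall_norm_mul_lt_one ha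
  -- take `R = r⁻¹`, so that reflection in the unit circle swaps the two circles
  obtain ⟨r, hr1, hr0, hrε, hrρ⟩ : ∃ r < 1, 0 < r ∧ 1 - ε < r ∧ r⁻¹ < ρ :=
    Eventually.exists_lt <| (lt_mem_nhds one_pos).and <| (lt_mem_nhds (by linarith)).and <|
      (continuousAt_inv₀ one_ne_zero).eventually (gt_mem_nhds (by simpa using hρ1))
  have hRa : ∀ i, ‖a i‖ * r⁻¹ < 1 := fun i =>
    (mul_le_mul_of_nonneg_left hrρ.le (norm_nonneg _)).trans_lt (hρ i)
  refine ⟨r, r⁻¹, hr0, hr1, one_lt_inv_iff₀.2 ⟨hr0, hr1⟩, fun i hi => ?_, fun z hz => ?_,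
    fun z hz => ?_⟩
  · rw [lt_div_iff₀ (norm_pos_iff.2 hi), mul_comm]
    exact hRa i
  · rw [← hz] at hrε hr1 ⊢
    exact hinner z hrε hr1
  · have hw : ‖(conj z)⁻¹‖ = r := by rw [norm_inv, Complex.norm_conj, hz, inv_inv]
    have hBw := hinner _ (hw ▸ hrε) (hw ▸ hr1)
    have hprod := norm_blaschkeProduct_mul_norm_inv_conj hC (hz ▸ one_lt_inv_iff₀.2 ⟨hr0, hr1⟩)
      (hz ▸ hRa)
    have hBz : 0 < ‖blaschkeProduct C a z‖ :=
      (norm_nonneg _).lt_of_ne fun h => by simp [← h] at hprod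
    rw [inv_lt_iff_one_lt_mul₀' hr0]
    nlinarith
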